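/- Suppose for each λ in a finite set Λ the risk R(Ŝ_λ) satisfies R(Ŝ_λ̂) ≤ R(Ŝ_λ) + 2|ε(λ)| + 2|ε(λ̂)| + δP(λ) for the selected λ̂, where for all λ, E|ε(λ)| ≤ δ·R(Ŝ_λ)/2 + B/δ and δP(λ) ≤ δ·R(Ŝ_λ) + B. Then R(Ŝ_λ̂) ≤ ((1+3δ)/(1−3δ))·min_{λ∈Λ} R(Ŝ_λ) + C·B/δ for some absolute constant C, provided 0 < δ < 1/3. -/
import Mathlib


open Finset

/-- Abstract deterministic core of the sharp oracle inequality. There is an absolute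
constant `C > 0` such that: if the risk `Rhat` of the selected estimator satisfies
`Rhat ≤ r λ + 2 a λ + 2 ahat + δ P λ` for all `λ`, where `a λ = E|ε(λ)| ≤ δ r λ / 2 + B/δ`,
`ahat = E|ε(λ̂)| ≤ δ Rhat / 2 + B/δ` and `δ P λ ≤ δ r λ + B`, then
`Rhat ≤ (1+3δ)/(1-3δ) min_λ r λ + C B / δ`, for `0 < δ < 1/3`. -/
theorem abstract_oracle_inequality :
    ∃ C : ℝ, 0 < C ∧
      ∀ (ι : Type) (_ : Fintype ι) (_ : Nonempty ι)
        (δ B Rhat ahat : ℝ) (r a p : ι → ℝ),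
        0 < δ → δ < 1 / 3 → 0 ≤ B → 0 ≤ Rhat → 0 ≤ ahat →
        (∀ lam, 0 ≤ r lam) → (∀ lam, 0 ≤ a lam) →
        (∀ lam, Rhat ≤ r lam + 2 * a lam + 2 * ahat + δ * p lam) →
        (∀ lam, a lam ≤ δ * r lam / 2 + B / δ) →
        (ahat ≤ δ * Rhat / 2 + B / δ) →
        (∀ lam, δ * p lam ≤ δ * r lam + B) →
        Rhat ≤ (1 + 3 * δ) / (1 - 3 * δ) * (⨅ lam, r lam) + C * B / δ := by
  refine ⟨8, by norm_num, ?_⟩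
  intro ι hFin hNe δ B Rhat ahat r a p hδ hδ3 hB hR hah hr ha hineq ha2 hah2 hp
  have hδ3' : 0 < 1 - 3 * δ := by linarith
  have hδ1 : 0 < 1 - δ := by linarith
  obtain ⟨lam0, hmin⟩ := Finite.exists_min r
  set q : ℝ := B / δ with hq
  have hq0 : 0 ≤ q := div_nonneg hB hδ.le
  have hBq : B ≤ q := by
    rw [hq, le_div_iff₀ hδ]; nlinarith
  -- step 1
  have h1 : (1 - δ) * Rhat ≤ (1 + 2 * δ) * r lam0 + 5 * q := by
    have := hineq lam0
    have := ha2 lam0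
    have := hp lam0
    nlinarith
  have h38 : (0:ℝ) ≤ 3 - 8 * δ := by linarith
  have hpoly : (1 - 3 * δ) * ((1 + 2 * δ) * r lam0 + 5 * q)
      ≤ (1 - δ) * ((1 + 3 * δ) * r lam0 + 8 * (1 - 3 * δ) * q) := by
    nlinarith [mul_nonneg hδ.le (hr lam0), mul_nonneg (mul_nonneg hδ.le hδ.le) (hr lam0),
      mul_nonneg (mul_nonneg hδ3'.le h38) hq0]
  have h2 : (1 - 3 * δ) * Rhat ≤ (1 + 3 * δ) * r lam0 + 8 * (1 - 3 * δ) * q := by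
    have hA : (1 - δ) * ((1 - 3 * δ) * Rhat)
        ≤ (1 - δ) * ((1 + 3 * δ) * r lam0 + 8 * (1 - 3 * δ) * q) := by
      calc (1 - δ) * ((1 - 3 * δ) * Rhat) = (1 - 3 * δ) * ((1 - δ) * Rhat) := by ring
        _ ≤ (1 - 3 * δ) * ((1 + 2 * δ) * r lam0 + 5 * q) :=
            mul_le_mul_of_nonneg_left h1 hδ3'.le
        _ ≤ _ := hpoly
    exact le_of_mul_le_mul_left hA hδ1
  have h3 : Rhat ≤ ((1 + 3 * δ) * r lam0 + 8 * (1 - 3 * δ) * q) / (1 - 3 * δ) := by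
    rw [le_div_iff₀ hδ3']; nlinarith [h2]
  have h4 : ((1 + 3 * δ) * r lam0 + 8 * (1 - 3 * δ) * q) / (1 - 3 * δ)
      = (1 + 3 * δ) / (1 - 3 * δ) * r lam0 + 8 * q := by
    field_simp
  have hinf : r lam0 ≤ ⨅ lam, r lam := le_ciInf hmin
  have hcoef : 0 ≤ (1 + 3 * δ) / (1 - 3 * δ) := by positivity
  have h5 : (1 + 3 * δ) / (1 - 3 * δ) * r lam0 ≤
      (1 + 3 * δ) / (1 - 3 * δ) * (⨅ lam, r lam) :=
    mul_le_mul_of_nonneg_left hinf hcoef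
  have h6 : (8 : ℝ) * B / δ = 8 * q := by rw [hq]; ring
  rw [h6]
  calc Rhat ≤ (1 + 3 * δ) / (1 - 3 * δ) * r lam0 + 8 * q := by rw [← h4]; exact h3
    _ ≤ (1 + 3 * δ) / (1 - 3 * δ) * (⨅ lam, r lam) + 8 * q := by linarith
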